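/- For N ≥ 3 and U_ε(x) = c_N (ε/(ε²+|x|²))^{(N-2)/2}, the integral of U_ε^{2N/(N-2)} over the slab ℝ^{N-1} × (0,1) satisfies ∫_{ℝ^{N-1}×(0,1)} U_ε^{2N/(N-2)} = c_N^{2N/(N-2)} [ ∫_{ℝ^N_+} (1+|y|²)^{-N} dy − (ε^N/N) ∫_{ℝ^{N-1}} (1+|y'|²)^{-N} dy' + o(ε^N) ] as ε → 0⁺, where ℝ^N_+ = ℝ^{N-1} × (0,∞). -/

import Mathlib

/-! After the substitution `x = ε y` the integrand becomes `c ^ (2N/(N-2)) (1 + |y|²) ^ (-N)`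
on the slab `0 < y_N < 1/ε`, so the defect with respect to the half-space integral is the
integral over `y_N ≥ 1/ε`. By Fubini and the scaling `y' ↦ √(1 + t²) y'` in the first `N - 1`
variables this defect is `K ∫_{1/ε}^∞ (1 + t²) ^ (-(N + 1)/2) dt` with
`K = ∫ (1 + |y'|²) ^ (-N)`. Bernoulli's inequality gives
`0 ≤ t ^ (-2s) - (1 + t²) ^ (-s) ≤ s t ^ (-2s-2)`, so the tail integral is
`ε ^ N / N + O(ε ^ (N + 2))`. -/

open MeasureTheory Set Filter Asymptotics

noncomputable section

abbrev Eucl (n : ℕ) := EuclideanSpace ℝ (Fin n)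

open Module Topology

lemma rpow_neg_sub_one_add_rpow_neg_le {a s : ℝ} (ha : 0 < a) (hs : 1 ≤ s) :
    a ^ (-s) - (1 + a) ^ (-s) ≤ s * a ^ (-s - 1) := by
  have hA : 0 < 1 + a := by linarith
  have hbernoulli : 1 - s / (1 + a) ≤ (a / (1 + a)) ^ s := by
    have h := one_add_mul_self_le_rpow_one_add (s := -1 / (1 + a))
      (by rw [neg_div, neg_le_neg_iff, div_le_one hA]; linarith) hs
    have h1 : 1 + -1 / (1 + a) = a / (1 + a) := by field_simp; ring
    rw [h1] at h
    linarith [show s * (-1 / (1 + a)) = -(s / (1 + a)) by ring]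
  have hsplit : (1 + a) ^ (-s) = a ^ (-s) * (a / (1 + a)) ^ s := by
    rw [Real.div_rpow ha.le hA.le, Real.rpow_neg hA.le, Real.rpow_neg ha.le]
    field_simp [(Real.rpow_pos_of_pos ha s).ne']
  calc a ^ (-s) - (1 + a) ^ (-s) = a ^ (-s) * (1 - (a / (1 + a)) ^ s) := by rw [hsplit]; ring
    _ ≤ a ^ (-s) * (s / a) := by
        gcongr
        calc 1 - (a / (1 + a)) ^ s ≤ s / (1 + a) := by linarith
          _ ≤ s / a := by gcongr; linarith
    _ = s * a ^ (-s - 1) := by rw [Real.rpow_sub_one ha.ne']; ring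

lemma rpow_neg_two_mul_eq_sq_rpow_neg {t : ℝ} (ht : 0 ≤ t) (s : ℝ) :
    t ^ (-(2 * s)) = (t ^ 2) ^ (-s) := by
  rw [← Real.rpow_natCast, ← Real.rpow_mul ht]; ring_nf

lemma integral_Ioi_one_add_sq_rpow_neg_bounds {s T : ℝ} (hs : 1 ≤ s) (hT : 0 < T) :
    0 ≤ T ^ (1 - 2 * s) / (2 * s - 1) - ∫ t in Ioi T, (1 + t ^ 2) ^ (-s) ∧
      T ^ (1 - 2 * s) / (2 * s - 1) - ∫ t in Ioi T, (1 + t ^ 2) ^ (-s)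
        ≤ s / (2 * s + 1) * T ^ (-(2 * s) - 1) := by
  have hpos : ∀ t ∈ Ioi T, 0 < t := fun t ht => hT.trans ht
  have hlower : ∀ t ∈ Ioi T, (1 + t ^ 2) ^ (-s) ≤ t ^ (-(2 * s)) := fun t ht => by
    rw [rpow_neg_two_mul_eq_sq_rpow_neg (hpos t ht).le]
    exact Real.rpow_le_rpow_of_nonpos (pow_pos (hpos t ht) 2) (by linarith) (by linarith)
  have hupper : ∀ t ∈ Ioi T, t ^ (-(2 * s)) - (1 + t ^ 2) ^ (-s) ≤ s * t ^ (-(2 * s) - 2) :=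
    fun t ht => by
      have h := rpow_neg_sub_one_add_rpow_neg_le (pow_pos (hpos t ht) 2) hs
      rwa [← rpow_neg_two_mul_eq_sq_rpow_neg (hpos t ht).le, show -s - 1 = -(s + 1) by ring,
        ← rpow_neg_two_mul_eq_sq_rpow_neg (hpos t ht).le,
        show -(2 * (s + 1)) = -(2 * s) - 2 by ring] at h
  have hmain : IntegrableOn (fun t : ℝ => t ^ (-(2 * s))) (Ioi T) :=
    integrableOn_Ioi_rpow_of_lt (by linarith) hT
  have hcorr : IntegrableOn (fun t : ℝ => t ^ (-(2 * s) - 2)) (Ioi T) :=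
    integrableOn_Ioi_rpow_of_lt (by linarith) hT
  have hf : IntegrableOn (fun t : ℝ => (1 + t ^ 2) ^ (-s)) (Ioi T) := by
    refine hmain.mono' ((by fun_prop : Continuous fun t : ℝ => 1 + t ^ 2).rpow_const
      fun t => Or.inl (by positivity)).aestronglyMeasurable ((ae_restrict_iff' measurableSet_Ioi).2
      (Eventually.of_forall fun t ht => ?_))
    rw [Real.norm_of_nonneg (by positivity)]
    exact hlower t ht
  have hdiff : T ^ (1 - 2 * s) / (2 * s - 1) - ∫ t in Ioi T, (1 + t ^ 2) ^ (-s)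
      = ∫ t in Ioi T, (t ^ (-(2 * s)) - (1 + t ^ 2) ^ (-s)) := by
    rw [integral_sub hmain hf, integral_Ioi_rpow_of_lt (by linarith) hT,
      show -(2 * s) + 1 = 1 - 2 * s by ring, neg_div, ← div_neg, neg_sub]
  rw [hdiff]
  refine ⟨setIntegral_nonneg measurableSet_Ioi fun t ht => sub_nonneg.2 (hlower t ht), ?_⟩
  calc ∫ t in Ioi T, (t ^ (-(2 * s)) - (1 + t ^ 2) ^ (-s))
      ≤ ∫ t in Ioi T, s * t ^ (-(2 * s) - 2) :=
        setIntegral_mono_on (hmain.sub hf) (hcorr.const_mul s) measurableSet_Ioi hupper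
    _ = s / (2 * s + 1) * T ^ (-(2 * s) - 1) := by
        rw [integral_const_mul, integral_Ioi_rpow_of_lt (by linarith) hT,
          show -(2 * s) - 2 + 1 = -(2 * s + 1) by ring, neg_div, div_neg, neg_neg,
          show -(2 * s + 1) = -(2 * s) - 1 by ring]
        ring

lemma sub_integral_Ioi_inv_one_add_sq_rpow_neg_isBigO {s : ℝ} (hs : 1 ≤ s) :
    (fun ε : ℝ => ε ^ (2 * s - 1) / (2 * s - 1) - ∫ t in Ioi ε⁻¹, (1 + t ^ 2) ^ (-s))
      =O[𝓝[>] 0] fun ε => ε ^ (2 * s + 1) := by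
  refine IsBigO.of_bound (s / (2 * s + 1)) ?_
  filter_upwards [self_mem_nhdsWithin] with ε (hε : 0 < ε)
  have hinv : ∀ a : ℝ, ε⁻¹ ^ (-a) = ε ^ a := fun a => by
    rw [Real.inv_rpow hε.le, Real.rpow_neg hε.le, inv_inv]
  obtain ⟨hnonneg, hle⟩ := integral_Ioi_one_add_sq_rpow_neg_bounds hs (inv_pos.2 hε)
  rw [show 1 - 2 * s = -(2 * s - 1) by ring, hinv] at hnonneg hle
  rw [show -(2 * s) - 1 = -(2 * s + 1) by ring, hinv] at hle
  rw [Real.norm_of_nonneg hnonneg, Real.norm_of_nonneg (Real.rpow_nonneg hε.le _)]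
  exact hle

lemma isLittleO_rpow_rpow_nhdsGT_zero {a b : ℝ} (hab : a < b) :
    (fun x : ℝ => x ^ b) =o[𝓝[>] 0] fun x => x ^ a := by
  have hlim : Tendsto (fun x : ℝ => x ^ (b - a)) (𝓝[>] 0) (𝓝 0) := by
    have h := (Real.continuous_rpow_const (sub_pos.2 hab).le).tendsto 0
    rw [Real.zero_rpow (sub_pos.2 hab).ne'] at h
    exact h.mono_left nhdsWithin_le_nhds
  refine (((isLittleO_one_iff ℝ).2 hlim).mul_isBigO (isBigO_refl (fun x : ℝ => x ^ a) _)).congr'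
    ?_ (Eventually.of_forall fun x => one_mul _)
  filter_upwards [self_mem_nhdsWithin] with x (hx : 0 < x)
  rw [← Real.rpow_add hx, sub_add_cancel]

lemma setIntegral_univ_prod_Ioo_eq_sub {α : Type*} [MeasurableSpace α] {μ : Measure (α × ℝ)}
    {f : α × ℝ → ℝ} (hf : Integrable f μ) {a T : ℝ} (haT : a < T) :
    ∫ y in univ ×ˢ Ioo a T, f y ∂μ
      = ∫ y in univ ×ˢ Ioi a, f y ∂μ - ∫ y in univ ×ˢ Ici T, f y ∂μ := by
  have hdisj : Disjoint (univ ×ˢ Ioo a T : Set (α × ℝ)) (univ ×ˢ Ici T) :=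
    disjoint_prod.2 (Or.inr (disjoint_left.2 fun _ hx hx' => not_le.2 hx.2 hx'))
  rw [eq_sub_iff_add_eq, ← setIntegral_union hdisj (MeasurableSet.univ.prod measurableSet_Ici)
    hf.integrableOn hf.integrableOn, ← prod_union, Ioo_union_Ici_eq_Ioi haT]

section Slab

variable {E : Type*} [NormedAddCommGroup E] [NormedSpace ℝ E] [FiniteDimensional ℝ E]
  [MeasurableSpace E] [BorelSpace E] (μ : Measure E) [μ.IsAddHaarMeasure]

lemma integrable_one_add_norm_sq_add_sq_rpow_neg {r : ℝ}
    (hr : (finrank ℝ E : ℝ) + 1 < 2 * r) :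
    Integrable (fun y : E × ℝ => (1 + ‖y.1‖ ^ 2 + y.2 ^ 2) ^ (-r)) (μ.prod volume) := by
  have hdom : Integrable (fun y : E × ℝ => (1 + ‖y‖ ^ 2) ^ (-(2 * r) / 2)) (μ.prod volume) :=
    integrable_rpow_neg_one_add_norm_sq (by rwa [Module.finrank_prod, Module.finrank_self,
      Nat.cast_add, Nat.cast_one])
  refine hdom.mono' ((by fun_prop : Continuous fun y : E × ℝ => 1 + ‖y.1‖ ^ 2 + y.2 ^ 2).rpow_const
    fun y => Or.inl (by positivity)).aestronglyMeasurable (Eventually.of_forall fun y => ?_)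
  have hnorm : ‖y‖ ^ 2 ≤ ‖y.1‖ ^ 2 + y.2 ^ 2 := by
    rw [Prod.norm_def, Real.norm_eq_abs, ← sq_abs y.2]
    rcases le_total ‖y.1‖ |y.2| with h | h
    · rw [max_eq_right h]; nlinarith [norm_nonneg y.1]
    · rw [max_eq_left h]; nlinarith [abs_nonneg y.2]
  rw [Real.norm_of_nonneg (by positivity), neg_div, mul_div_cancel_left₀ r two_ne_zero]
  exact Real.rpow_le_rpow_of_nonpos (by positivity) (by linarith)
    (by linarith [(finrank ℝ E).cast_nonneg (α := ℝ)])

lemma integral_one_add_norm_sq_add_rpow_neg (r t : ℝ) :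
    ∫ z, (1 + ‖z‖ ^ 2 + t ^ 2) ^ (-r) ∂μ
      = (1 + t ^ 2) ^ ((finrank ℝ E : ℝ) / 2 - r) * ∫ z, (1 + ‖z‖ ^ 2) ^ (-r) ∂μ := by
  have ht : 0 < 1 + t ^ 2 := by positivity
  set a := Real.sqrt (1 + t ^ 2) with ha_def
  have ha : 0 < a := Real.sqrt_pos.2 ht
  have hscale : ∀ z : E, (1 + ‖a • z‖ ^ 2 + t ^ 2) ^ (-r)
      = (1 + t ^ 2) ^ (-r) * (1 + ‖z‖ ^ 2) ^ (-r) := fun z => by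
    rw [norm_smul, Real.norm_of_nonneg ha.le, mul_pow, Real.sq_sqrt ht.le,
      ← Real.mul_rpow ht.le (by positivity)]
    ring_nf
  have h := Measure.integral_comp_smul_of_nonneg μ (fun z : E => (1 + ‖z‖ ^ 2 + t ^ 2) ^ (-r)) a
    (hR := ha.le)
  simp only [hscale, integral_const_mul, smul_eq_mul] at h
  have hpow : a ^ finrank ℝ E = (1 + t ^ 2) ^ ((finrank ℝ E : ℝ) / 2) := by
    rw [ha_def, Real.sqrt_eq_rpow, ← Real.rpow_natCast, ← Real.rpow_mul ht.le]; ring_nf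
  rw [eq_inv_mul_iff_mul_eq₀ (pow_ne_zero _ ha.ne'), hpow, ← mul_assoc,
    ← Real.rpow_add ht] at h
  rw [← h, sub_eq_add_neg]

lemma setIntegral_univ_prod_one_add_norm_sq_add_sq_rpow_neg {r : ℝ}
    (hr : (finrank ℝ E : ℝ) + 1 < 2 * r) (s : Set ℝ) :
    ∫ y in univ ×ˢ s, (1 + ‖y.1‖ ^ 2 + y.2 ^ 2) ^ (-r) ∂(μ.prod volume)
      = (∫ z, (1 + ‖z‖ ^ 2) ^ (-r) ∂μ) * ∫ t in s, (1 + t ^ 2) ^ ((finrank ℝ E : ℝ) / 2 - r) := by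
  rw [← Measure.prod_restrict, Measure.restrict_univ, integral_prod_symm _
    ((integrable_one_add_norm_sq_add_sq_rpow_neg μ hr).mono_measure
      (Measure.prod_mono le_rfl Measure.restrict_le_self)), ← integral_const_mul]
  simp only [integral_one_add_norm_sq_add_rpow_neg, mul_comm]

lemma setIntegral_univ_prod_Ioo_one_add_norm_sq_add_sq_rpow_neg {r : ℝ}
    (hr : (finrank ℝ E : ℝ) + 1 < 2 * r) {T : ℝ} (hT : 0 < T) :
    ∫ y in univ ×ˢ Ioo 0 T, (1 + ‖y.1‖ ^ 2 + y.2 ^ 2) ^ (-r) ∂(μ.prod volume)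
      = ∫ y in univ ×ˢ Ioi 0, (1 + ‖y.1‖ ^ 2 + y.2 ^ 2) ^ (-r) ∂(μ.prod volume)
        - (∫ z, (1 + ‖z‖ ^ 2) ^ (-r) ∂μ)
          * ∫ t in Ioi T, (1 + t ^ 2) ^ ((finrank ℝ E : ℝ) / 2 - r) := by
  rw [setIntegral_univ_prod_Ioo_eq_sub (integrable_one_add_norm_sq_add_sq_rpow_neg μ hr) hT,
    setIntegral_univ_prod_one_add_norm_sq_add_sq_rpow_neg μ hr (Ici T),
    integral_Ici_eq_integral_Ioi]

open Pointwise in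
lemma setIntegral_univ_prod_Ioo_bubble_rpow {ε : ℝ} (hε : 0 < ε) (T : ℝ) :
    ∫ x in univ ×ˢ Ioo 0 T, (ε / (ε ^ 2 + ‖x.1‖ ^ 2 + x.2 ^ 2)) ^ ((finrank ℝ E : ℝ) + 1)
        ∂(μ.prod volume)
      = ∫ y in univ ×ˢ Ioo 0 (T / ε), (1 + ‖y.1‖ ^ 2 + y.2 ^ 2) ^ (-((finrank ℝ E : ℝ) + 1))
        ∂(μ.prod volume) := by
  set d : ℝ := (finrank ℝ E : ℝ) + 1
  have hscale : ∀ y : E × ℝ, (ε / (ε ^ 2 + ‖(ε • y).1‖ ^ 2 + (ε • y).2 ^ 2)) ^ d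
      = (ε ^ finrank ℝ (E × ℝ))⁻¹ * (1 + ‖y.1‖ ^ 2 + y.2 ^ 2) ^ (-d) := fun y => by
    have hy : 0 < 1 + ‖y.1‖ ^ 2 + y.2 ^ 2 := by positivity
    have h : ε / (ε ^ 2 + ‖(ε • y).1‖ ^ 2 + (ε • y).2 ^ 2) = ε⁻¹ * (1 + ‖y.1‖ ^ 2 + y.2 ^ 2)⁻¹ := by
      rw [Prod.smul_fst, Prod.smul_snd, norm_smul, Real.norm_of_nonneg hε.le, smul_eq_mul]
      field_simp
    rw [h, Real.mul_rpow (by positivity) (by positivity), Real.inv_rpow hε.le,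
      Real.inv_rpow hy.le, ← Real.rpow_neg hy.le, Module.finrank_prod, Module.finrank_self,
      ← Real.rpow_natCast ε, Nat.cast_add, Nat.cast_one]
  have h := Measure.setIntegral_comp_smul_of_pos (μ.prod volume)
    (fun x : E × ℝ => (ε / (ε ^ 2 + ‖x.1‖ ^ 2 + x.2 ^ 2)) ^ d) (univ ×ˢ Ioo 0 (T / ε)) hε
  rw [smul_set_prod, smul_set_univ₀ hε.ne', LinearOrderedField.smul_Ioo hε, mul_zero,
    mul_div_cancel₀ T hε.ne'] at h
  simp only [hscale, integral_const_mul, smul_eq_mul] at h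
  exact (mul_left_cancel₀ (inv_ne_zero (pow_ne_zero _ hε.ne')) h).symm

lemma setIntegral_univ_prod_Ioo_zero_one_bubble_rpow {ε : ℝ} (hε : 0 < ε) :
    ∫ x in univ ×ˢ Ioo 0 1, (ε / (ε ^ 2 + ‖x.1‖ ^ 2 + x.2 ^ 2)) ^ ((finrank ℝ E : ℝ) + 1)
        ∂(μ.prod volume)
      = ∫ y in univ ×ˢ Ioi 0, (1 + ‖y.1‖ ^ 2 + y.2 ^ 2) ^ (-((finrank ℝ E : ℝ) + 1))
          ∂(μ.prod volume)
        - (∫ z, (1 + ‖z‖ ^ 2) ^ (-((finrank ℝ E : ℝ) + 1)) ∂μ)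
          * ∫ t in Ioi ε⁻¹, (1 + t ^ 2) ^ (-(((finrank ℝ E : ℝ) + 2) / 2)) := by
  rw [setIntegral_univ_prod_Ioo_bubble_rpow μ hε, one_div,
    setIntegral_univ_prod_Ioo_one_add_norm_sq_add_sq_rpow_neg μ (by linarith) (inv_pos.2 hε)]
  ring_nf

end Slab

/-- asymptotic expansion as ε → 0⁺ of the critical-power integral of
U_ε(x) = c_N (ε/(ε²+|x|²))^{(N-2)/2} over the slab ℝ^{N-1} × (0,1):
∫ U_ε^{2N/(N-2)} = c_N^{2N/(N-2)} [∫_{ℝ^N_+}(1+|y|²)^{-N} − (ε^N/N)∫_{ℝ^{N-1}}(1+|y'|²)^{-N}]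
+ o(ε^N). -/
theorem bubble_critical_integral_expansion (N : ℕ) (hN : 3 ≤ N) (c : ℝ) (hc : 0 < c) :
    (fun ε : ℝ =>
        (∫ x in (Set.univ ×ˢ Set.Ioo (0 : ℝ) 1 : Set (Eucl (N - 1) × ℝ)),
            (c * (ε / (ε ^ 2 + ‖x.1‖ ^ 2 + x.2 ^ 2)) ^ (((N : ℝ) - 2) / 2))
              ^ ((2 * (N : ℝ)) / ((N : ℝ) - 2)))
          - c ^ ((2 * (N : ℝ)) / ((N : ℝ) - 2)) *
            ((∫ y in (Set.univ ×ˢ Set.Ioi (0 : ℝ) : Set (Eucl (N - 1) × ℝ)),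
                (1 + ‖y.1‖ ^ 2 + y.2 ^ 2) ^ (-(N : ℝ)))
              - ε ^ (N : ℝ) / (N : ℝ) *
                ∫ y : Eucl (N - 1), (1 + ‖y‖ ^ 2) ^ (-(N : ℝ))))
      =o[nhdsWithin (0 : ℝ) (Set.Ioi 0)] fun ε => ε ^ (N : ℝ) := by
  have hN3 : (3 : ℝ) ≤ N := by exact_mod_cast hN
  have hd : (finrank ℝ (Eucl (N - 1)) : ℝ) + 1 = N := by
    rw [finrank_euclideanSpace_fin, Nat.cast_sub (by omega), Nat.cast_one, sub_add_cancel]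
  set s : ℝ := ((finrank ℝ (Eucl (N - 1)) : ℝ) + 2) / 2 with hs_def
  set p : ℝ := 2 * (N : ℝ) / ((N : ℝ) - 2) with hp_def
  set K : ℝ := ∫ y : Eucl (N - 1), (1 + ‖y‖ ^ 2) ^ (-(N : ℝ))
  have hpow : ∀ ε > 0, ∀ x : Eucl (N - 1) × ℝ,
      (c * (ε / (ε ^ 2 + ‖x.1‖ ^ 2 + x.2 ^ 2)) ^ (((N : ℝ) - 2) / 2)) ^ p
        = c ^ p * (ε / (ε ^ 2 + ‖x.1‖ ^ 2 + x.2 ^ 2)) ^ (N : ℝ) := fun ε hε x => by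
    have hx : 0 ≤ ε / (ε ^ 2 + ‖x.1‖ ^ 2 + x.2 ^ 2) := by positivity
    have hN2 : (N : ℝ) - 2 ≠ 0 := by linarith
    rw [Real.mul_rpow hc.le (Real.rpow_nonneg hx _), ← Real.rpow_mul hx, hp_def]
    field_simp
  refine (((sub_integral_Ioi_inv_one_add_sq_rpow_neg_isBigO (s := s) (by linarith)).const_mul_left
    (c ^ p * K)).trans_isLittleO ?_).congr' ?_ EventuallyEq.rfl
  · rw [show 2 * s + 1 = N + 2 by linarith]
    exact isLittleO_rpow_rpow_nhdsGT_zero (by linarith)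
  · filter_upwards [self_mem_nhdsWithin] with ε (hε : 0 < ε)
    simp only [hpow ε hε, integral_const_mul]
    rw [Measure.volume_eq_prod, ← hd, setIntegral_univ_prod_Ioo_zero_one_bubble_rpow _ hε, hd,
      show 2 * s - 1 = N by linarith]
    ring
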